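/- arXiv:1412.1490 — 5 statements merged into one kernel-verified Lean document; each statement's English description precedes it below -/
import Mathlib

section
/- Suppose a splitting rule q on pairs (r,d) with r ≥ 0, d ≥ 1 satisfies the consistency relation (1 - q(m-1,1)) · q(m-1-d, d) = q(m-1-d, d+1) + q(m-d, d) for all applicable d, and suppose q(m-d, d) = 0 for all 2 ≤ d ≤ m and q(m-1,1) = 1/m. Then q(m-1-d, d) = 0 for all d ≥ 2 and q(m-2, 1) = 1/(m-1). -/
theorem stmt_6 (m : ℕ) (hm : 2 ≤ m) (q : ℕ → ℕ → ℝ)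
    (hcons : ∀ d, 1 ≤ d → d ≤ m - 1 →
      (1 - q (m - 1) 1) * q (m - 1 - d) d = q (m - 1 - d) (d + 1) + q (m - d) d)
    (hzero : ∀ d, 2 ≤ d → d ≤ m → q (m - d) d = 0)
    (h1 : q (m - 1) 1 = 1 / m) :
    (∀ d, 2 ≤ d → d ≤ m - 1 → q (m - 1 - d) d = 0) ∧ q (m - 2) 1 = 1 / (m - 1 : ℝ) := by
  have hmR : (0:ℝ) < (m:ℝ) := by positivity
  have hne : (1 : ℝ) - q (m - 1) 1 ≠ 0 := by
    rw [h1]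
    have h2 : (2:ℝ) ≤ (m:ℝ) := by exact_mod_cast hm
    have : (1:ℝ)/m < 1 := by
      rw [div_lt_one hmR]; linarith
    linarith
  constructor
  · intro d hd2 hdm
    have hd1 : 1 ≤ d := by omega
    have hc := hcons d hd1 hdm
    have hA : q (m - d) d = 0 := hzero d hd2 (by omega)
    have hB : q (m - 1 - d) (d + 1) = 0 := by
      have := hzero (d + 1) (by omega) (by omega)
      have he : m - (d + 1) = m - 1 - d := by omega
      rwa [he] at this
    rw [hA, hB] at hc
    have := mul_eq_zero.mp (by linarith : (1 - q (m - 1) 1) * q (m - 1 - d) d = 0)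
    tauto
  · have hc := hcons 1 le_rfl (by omega)
    have hA : q (m - 1) 1 = 1 / m := h1
    have hB : q (m - 1 - 1) 2 = 0 := by
      have := hzero 2 le_rfl hm
      have he : m - 2 = m - 1 - 1 := by omega
      rwa [he] at this
    rw [hB, hA] at hc
    have he2 : m - 1 - 1 = m - 2 := rfl
    rw [he2] at hc
    have hm1R : (1:ℝ) ≤ (m:ℝ) := by exact_mod_cast (by omega : 1 ≤ m)
    have hm1 : (m:ℝ) - 1 ≠ 0 := by
      have h2 : (2:ℝ) ≤ (m:ℝ) := by exact_mod_cast hm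
      linarith
    field_simp at hc ⊢
    linear_combination hc
end

section
/- Let ζ(n) = ψ(n+ρ) - ψ(ρ) for ρ > 0, where ψ is the digamma function, so ζ(n) = ∑_{j=0}^{n-1} 1/(ρ+j). Then for all r ≥ 0 and d ≥ 1, the d-th forward difference satisfies (-1)^{d+1}(Δ^d ζ)(r) = Γ(ρ+r)Γ(d)/Γ(ρ+r+d) = B(ρ+r, d), where B is the Beta function. -/
/-!
Writing `B(x, d) = Γ(x) Γ(d) / Γ(x + d)`, the functional equation of `Γ` gives the Beta recurrence
`B(x, d) - B(x + 1, d) = B(x, d + 1)`. Since `Δ^(d+1) ζ (r) = Δ^d ζ (r + 1) - Δ^d ζ (r)`, the identity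
follows by induction on `d`, starting from `Δ ζ (r) = 1 / (ρ + r) = B(ρ + r, 1)`.
-/

/-- d-th order forward difference of a sequence: (Δ^d ζ)(r) = ∑_{j=0}^d (-1)^{d-j} C(d,j) ζ(r+j). -/
noncomputable def fdiff (ζ : ℕ → ℝ) (d r : ℕ) : ℝ :=
  ∑ j ∈ Finset.range (d + 1), (-1 : ℝ) ^ (d - j) * (d.choose j : ℝ) * ζ (r + j)

open Real Finset

lemma fdiff_zero (ζ : ℕ → ℝ) (r : ℕ) : fdiff ζ 0 r = ζ r := by
  simp [fdiff]

lemma fdiff_eq_fwdDiff_iterate (ζ : ℕ → ℝ) (d r : ℕ) : fdiff ζ d r = (fwdDiff 1)^[d] ζ r := by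
  rw [fwdDiff_iter_eq_sum_shift, fdiff]
  refine sum_congr rfl fun k _ => ?_
  simp [smul_eq_mul, mul_assoc]

lemma fdiff_succ (ζ : ℕ → ℝ) (d r : ℕ) :
    fdiff ζ (d + 1) r = fdiff ζ d (r + 1) - fdiff ζ d r := by
  simp only [fdiff_eq_fwdDiff_iterate, Function.iterate_succ_apply', fwdDiff]

lemma Gamma_mul_Gamma_div_sub_succ_left {x y : ℝ} (hx : x ≠ 0) (hy : y ≠ 0) (hxy : x + y ≠ 0) :
    Gamma x * Gamma y / Gamma (x + y) - Gamma (x + 1) * Gamma y / Gamma (x + 1 + y) =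
      Gamma x * Gamma (y + 1) / Gamma (x + y + 1) := by
  rw [show x + 1 + y = x + y + 1 by ring, Gamma_add_one hx, Gamma_add_one hy, Gamma_add_one hxy]
  rcases eq_or_ne (Gamma (x + y)) 0 with h | h
  · simp [h]
  · field_simp
    ring

theorem stmt_11 (ρ : ℝ) (hρ : 0 < ρ) (ζ : ℕ → ℝ)
    (hζ : ∀ n, ζ n = ∑ j ∈ Finset.range n, 1 / (ρ + j))
    (r d : ℕ) (hd : 1 ≤ d) :
    (-1 : ℝ) ^ (d + 1) * fdiff ζ d r =
      Real.Gamma (ρ + r) * Real.Gamma d / Real.Gamma (ρ + r + d) := by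
  induction d, hd using Nat.le_induction generalizing r with
  | base =>
    have hr : ρ + r ≠ 0 := by positivity
    rw [fdiff_succ, fdiff_zero, fdiff_zero, hζ, hζ, sum_range_succ, Nat.cast_one, Gamma_one,
      Gamma_add_one hr]
    have hΓ := (Gamma_pos_of_pos (show 0 < ρ + r by positivity)).ne'
    field_simp
    ring
  | succ d _ ih =>
    have hr : ρ + r ≠ 0 := by positivity
    have hd0 : (d : ℝ) ≠ 0 := by positivity
    have hrd : ρ + r + d ≠ 0 := by positivity
    have ih' := ih (r + 1)
    push_cast at ih' ⊢
    rw [← add_assoc ρ] at ih'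
    rw [fdiff_succ, ← add_assoc, ← Gamma_mul_Gamma_div_sub_succ_left hr hd0 hrd,
      ← ih r, ← ih', pow_succ]
    ring
end

section
/- Let ζ satisfy the continuity condition (Δζ)(r+d)·(Δ^d ζ)(r) = (Δ^d ζ)(r+1)·(Δζ)(r) for all r ≥ 0, d ≥ 1 (with all forward differences nonzero). Then the right-continuity condition (Δ^{d-1}ζ)(r+2)/(Δ^{d-1}ζ)(r+1) · (Δζ)(r+1)/(Δζ)(r) = (Δ^d ζ)(r+1)/(Δ^d ζ)(r) holds for all r ≥ 0 and d > 1. -/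
/-! The continuity condition says `(Δ^d ζ)(r+1) / (Δ^d ζ)(r) = (Δζ)(r+d) / (Δζ)(r)`. Applied at
`(r+1, d-1)` it turns the first factor of the right-continuity condition into
`(Δζ)(r+d) / (Δζ)(r+1)`, and the product then telescopes to `(Δζ)(r+d) / (Δζ)(r)`, which is the
continuity condition at `(r, d)` once more. -/

theorem fdiff_succ_div_fdiff_eq {ζ : ℕ → ℝ} {r d : ℕ} (hd : fdiff ζ d r ≠ 0)
    (h1 : fdiff ζ 1 r ≠ 0)
    (hcont : fdiff ζ 1 (r + d) * fdiff ζ d r = fdiff ζ d (r + 1) * fdiff ζ 1 r) :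
    fdiff ζ d (r + 1) / fdiff ζ d r = fdiff ζ 1 (r + d) / fdiff ζ 1 r := by
  rw [div_eq_div_iff hd h1]
  exact hcont.symm

theorem stmt_12 (ζ : ℕ → ℝ)
    (hne : ∀ r d, 1 ≤ d → fdiff ζ d r ≠ 0)
    (hcont : ∀ r d, 1 ≤ d → fdiff ζ 1 (r + d) * fdiff ζ d r = fdiff ζ d (r + 1) * fdiff ζ 1 r) :
    ∀ r d, 1 < d →
      fdiff ζ (d - 1) (r + 2) / fdiff ζ (d - 1) (r + 1) * (fdiff ζ 1 (r + 1) / fdiff ζ 1 r) =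
        fdiff ζ d (r + 1) / fdiff ζ d r := by
  have ratio : ∀ r d, 1 ≤ d → fdiff ζ d (r + 1) / fdiff ζ d r = fdiff ζ 1 (r + d) / fdiff ζ 1 r :=
    fun r d hd ↦ fdiff_succ_div_fdiff_eq (hne r d hd) (hne r 1 le_rfl) (hcont r d hd)
  intro r d hd
  obtain ⟨e, rfl⟩ : ∃ e, d = e + 1 := ⟨d - 1, by omega⟩
  rw [Nat.add_sub_cancel, ratio (r + 1) e (by omega), ratio r (e + 1) (by omega),
    show r + 1 + e = r + (e + 1) by ring]
  exact div_mul_div_cancel₀ (hne (r + 1) 1 le_rfl)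
end

section
/- The sequence ζ defined by ζ(n) = ∑_{j=0}^{n-1} 1/(ρ+j) for ρ > 0 satisfies the weak-continuity condition (Δζ)(r+d)/(Δζ)(r) = (Δ^d ζ)(r+1)/(Δ^d ζ)(r) for all r ≥ 0 and d ≥ 1. -/
open Polynomial fwdDiff
open scoped Nat

lemma fdiff_eq_fwdDiff_iter (ζ : ℕ → ℝ) (d r : ℕ) : fdiff ζ d r = (Δ_[1])^[d] ζ r := by
  rw [fwdDiff_iter_eq_sum_shift, fdiff]
  refine Finset.sum_congr rfl fun k _ => ?_
  simp [zsmul_eq_mul]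

lemma fwdDiff_sum_range {G : Type*} [AddCommGroup G] (f : ℕ → G) :
    Δ_[1] (fun n => ∑ j ∈ Finset.range n, f j) = f := by
  funext n
  simp [fwdDiff, Finset.sum_range_succ]

lemma mul_ascPochhammer_eval_add_one {S : Type*} [CommSemiring S] (n : ℕ) (a : S) :
    a * (ascPochhammer S n).eval (a + 1) = (ascPochhammer S n).eval a * (a + n) := by
  rw [← ascPochhammer_succ_eval, ascPochhammer_succ_left]
  simp

lemma ascPochhammer_eval_div_eval_add_one {K : Type*} [Field K] (n : ℕ) {a : K}
    (ha : (ascPochhammer K n).eval (a + 1) ≠ 0) (han : a + n ≠ 0) :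
    (ascPochhammer K n).eval a / (ascPochhammer K n).eval (a + 1) = a / (a + n) := by
  rw [div_eq_div_iff ha han]
  exact (mul_ascPochhammer_eval_add_one n a).symm

lemma ascPochhammer_eval_add_natCast_ne_zero {R : Type*} [CommRing R] [IsDomain R] {x : R}
    (hx : ∀ n : ℕ, x + n ≠ 0) (d n : ℕ) : (ascPochhammer R d).eval (x + n) ≠ 0 := by
  rw [Ne, ascPochhammer_eval_eq_zero_iff]
  rintro ⟨k, -, hk⟩
  exact hx (n + k) (by push_cast; linear_combination hk)

theorem fwdDiff_iter_inv_add_natCast {K : Type*} [Field K] {x : K} (hx : ∀ n : ℕ, x + n ≠ 0)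
    (d n : ℕ) : (Δ_[1])^[d] (fun m : ℕ => (x + m)⁻¹) n =
      (-1) ^ d * d ! / (ascPochhammer K (d + 1)).eval (x + n) := by
  induction d generalizing n with
  | zero => simp
  | succ d ih =>
    rw [Function.iterate_succ_apply', fwdDiff, ih, ih, ascPochhammer_succ_eval (d + 1) (x + n),
      Nat.factorial_succ]
    have hA := ascPochhammer_eval_add_natCast_ne_zero hx (d + 1) (n + 1)
    have hB := ascPochhammer_eval_add_natCast_ne_zero hx (d + 1) n
    have hD := hx (n + (d + 1))
    have hstep := mul_ascPochhammer_eval_add_one (d + 1) (x + n)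
    push_cast at hA hD hstep ⊢
    rw [← add_assoc] at hA hD ⊢
    field_simp
    linear_combination -(-1) ^ d * d ! * hstep

theorem stmt_13 (ρ : ℝ) (hρ : 0 < ρ) (ζ : ℕ → ℝ)
    (hζ : ∀ n, ζ n = ∑ j ∈ Finset.range n, 1 / (ρ + j)) :
    ∀ r d : ℕ, 1 ≤ d →
      fdiff ζ 1 (r + d) / fdiff ζ 1 r = fdiff ζ d (r + 1) / fdiff ζ d r := by
  intro r d hd
  obtain ⟨e, rfl⟩ := Nat.exists_eq_add_of_le' hd
  have hx : ∀ n : ℕ, ρ + n ≠ 0 := fun n => by positivity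
  have hΔζ : Δ_[1] ζ = fun m : ℕ => (ρ + m)⁻¹ := by
    rw [funext hζ, fwdDiff_sum_range]
    simp only [one_div]
  have hfdiff (k n : ℕ) :
      fdiff ζ (k + 1) n = (-1) ^ k * k ! / (ascPochhammer ℝ (k + 1)).eval (ρ + n) := by
    rw [fdiff_eq_fwdDiff_iter, Function.iterate_succ_apply, hΔζ, fwdDiff_iter_inv_add_natCast hx]
  have hc (k : ℕ) : (-1 : ℝ) ^ k * k ! ≠ 0 := by simp [Nat.factorial_ne_zero]
  rw [hfdiff 0, hfdiff 0, hfdiff, hfdiff, div_div_div_cancel_left' _ _ (hc 0),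
    div_div_div_cancel_left' _ _ (hc e), zero_add, ascPochhammer_one, eval_X, eval_X]
  have hA := ascPochhammer_eval_add_natCast_ne_zero hx (e + 1) (r + 1)
  rw [Nat.cast_add_one, ← add_assoc ρ] at hA
  rw [Nat.cast_add_one r, ← add_assoc ρ, ascPochhammer_eval_div_eval_add_one (e + 1) hA
    (by simpa [add_assoc] using hx (r + (e + 1)))]
  push_cast
  ring
end

section
/- The probabilities of the Ewens sampling formula sum to one: for θ > 0 and n ≥ 1, ∑_{B ∈ P_n} θ^{#B} ∏_{b∈B} Γ(#b) = θ^{↑n}, where P_n is the set of partitions of {1,…,n}, #B is the number of blocks, #b the block size, and θ^{↑n} = θ(θ+1)⋯(θ+n-1). -/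
/-! Every partition of `insert a s` arises exactly once from a partition `P` of `s`, either by
adding `{a}` as a new block, which multiplies the weight by `θ`, or by adding `a` to a block `o`
of `P`, which multiplies it by `#o` since `Γ(k + 1) = k Γ(k)`. Summing over these choices
multiplies the total weight by `θ + #s`, which is the recursion of the rising factorial. -/

open scoped Classical

/-- `P` is a partition of `{1,…,n}` (modelled as `Fin n`): its blocks are nonempty,
pairwise disjoint, and cover everything. -/
def IsPartitionOfUniv {n : ℕ} (P : Finset (Finset (Fin n))) : Prop :=
  (∀ b ∈ P, b.Nonempty) ∧ (∀ b ∈ P, ∀ c ∈ P, b ≠ c → Disjoint b c) ∧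
    P.sup id = Finset.univ

open Finset

variable {α : Type*}

def IsPartitionOf [DecidableEq α] (s : Finset α) (P : Finset (Finset α)) : Prop :=
  (∀ b ∈ P, b.Nonempty) ∧ (∀ b ∈ P, ∀ c ∈ P, b ≠ c → Disjoint b c) ∧ P.sup id = s

noncomputable def ewensWeight (θ : ℝ) (P : Finset (Finset α)) : ℝ :=
  θ ^ #P * ∏ b ∈ P, Real.Gamma #b

namespace IsPartitionOf

variable [DecidableEq α] {s t b c o : Finset α} {P : Finset (Finset α)}

lemma nonempty (hP : IsPartitionOf s P) (hb : b ∈ P) : b.Nonempty := hP.1 b hb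

lemma disjoint (hP : IsPartitionOf s P) (hb : b ∈ P) (hc : c ∈ P) (hbc : b ≠ c) :
    Disjoint b c :=
  hP.2.1 b hb c hc hbc

lemma sup_id_eq (hP : IsPartitionOf s P) : P.sup id = s := hP.2.2

lemma subset (hP : IsPartitionOf s P) (hb : b ∈ P) : b ⊆ s :=
  hP.sup_id_eq ▸ le_sup (f := id) hb

lemma empty_notMem (hP : IsPartitionOf s P) : ∅ ∉ P :=
  fun h => not_nonempty_empty (hP.nonempty h)

lemma exists_mem (hP : IsPartitionOf s P) {x : α} (hx : x ∈ s) : ∃ b ∈ P, x ∈ b := by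
  rw [← hP.sup_id_eq] at hx
  simpa using mem_sup.1 hx

lemma eq_of_mem (hP : IsPartitionOf s P) (hb : b ∈ P) (hc : c ∈ P) {x : α} (hxb : x ∈ b)
    (hxc : x ∈ c) : b = c := by
  by_contra h
  exact disjoint_left.1 (hP.disjoint hb hc h) hxb hxc

lemma insert_notMem {a : α} (hP : IsPartitionOf s P) (ha : a ∉ s)
    (o : Finset α) : insert a o ∉ P :=
  fun h => ha (hP.subset h (mem_insert_self a o))

lemma sum_card (hP : IsPartitionOf s P) : ∑ b ∈ P, #b = #s := by
  rw [← hP.sup_id_eq, sup_eq_biUnion, card_biUnion]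
  · rfl
  · exact fun b hb c hc hbc => hP.disjoint hb hc hbc

lemma subset_of_mem_insert_empty (hP : IsPartitionOf s P) (ho : o ∈ insert ∅ P) : o ⊆ s := by
  obtain rfl | ho := mem_insert.1 ho
  exacts [empty_subset s, hP.subset ho]

lemma eq_empty (hP : IsPartitionOf ∅ P) : P = ∅ :=
  eq_empty_of_forall_notMem fun _ hb => (hP.nonempty hb).ne_empty (subset_empty.1 (hP.subset hb))

lemma erase (hP : IsPartitionOf s P) (ho : o ∈ P) : IsPartitionOf (s \ o) (P.erase o) := by
  refine ⟨fun b hb => hP.nonempty (mem_of_mem_erase hb),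
    fun b hb c hc => hP.disjoint (mem_of_mem_erase hb) (mem_of_mem_erase hc), ?_⟩
  ext x
  simp only [mem_sup, mem_erase, id, mem_sdiff]
  constructor
  · rintro ⟨b, ⟨hbo, hb⟩, hxb⟩
    exact ⟨hP.subset hb hxb, fun hxo => hbo (hP.eq_of_mem hb ho hxb hxo)⟩
  · rintro ⟨hxs, hxo⟩
    obtain ⟨b, hb, hxb⟩ := hP.exists_mem hxs
    exact ⟨b, ⟨fun hbo => hxo (hbo ▸ hxb), hb⟩, hxb⟩

lemma extend (hP : IsPartitionOf t P) (hb : b.Nonempty) (hbt : Disjoint b t) :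
    IsPartitionOf (b ∪ t) (insert b P) := by
  refine ⟨?_, ?_, by rw [sup_insert, hP.sup_id_eq, id, sup_eq_union]⟩
  · simpa [hb] using hP.1
  · have hbP : ∀ c ∈ P, Disjoint b c := fun c hc => hbt.mono_right (hP.subset hc)
    simp only [mem_insert]
    rintro c (rfl | hc) d (rfl | hd) hcd
    exacts [absurd rfl hcd, hbP d hd, (hbP c hc).symm, hP.disjoint hc hd hcd]

end IsPartitionOf

variable [DecidableEq α] {s o : Finset α} {P : Finset (Finset α)} {a : α}

-- With `o = ∅` this adds `{a}` as a new block.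
def insertInto (a : α) (P : Finset (Finset α)) (o : Finset α) : Finset (Finset α) :=
  insert (insert a o) (P.erase o)

lemma isPartitionOf_insertInto (hP : IsPartitionOf s P) (ha : a ∉ s)
    (ho : o ∈ insert ∅ P) : IsPartitionOf (insert a s) (insertInto a P o) := by
  have hos := hP.subset_of_mem_insert_empty ho
  have hPo : IsPartitionOf (s \ o) (P.erase o) := by
    obtain rfl | ho := mem_insert.1 ho
    · simpa [erase_eq_of_notMem hP.empty_notMem] using hP
    · exact hP.erase ho
  have hdisj : Disjoint (insert a o) (s \ o) := by
    rw [disjoint_insert_left]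
    exact ⟨fun h => ha (mem_sdiff.1 h).1, disjoint_sdiff⟩
  simpa [insertInto, insert_union, union_sdiff_of_subset hos] using
    hPo.extend (insert_nonempty a o) hdisj

lemma erase_insertInto (hP : IsPartitionOf s P) (ha : a ∉ s) :
    (insertInto a P o).erase (insert a o) = P.erase o :=
  erase_insert fun h => hP.insert_notMem ha o (mem_of_mem_erase h)

lemma insertInto_inj {P' : Finset (Finset α)} {o' : Finset α}
    (hP : IsPartitionOf s P) (hP' : IsPartitionOf s P') (ha : a ∉ s) (ho : o ∈ insert ∅ P)
    (ho' : o' ∈ insert ∅ P') (h : insertInto a P o = insertInto a P' o') : P = P' ∧ o = o' := by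
  have hQ := isPartitionOf_insertInto hP ha ho
  have hao : a ∉ o := fun h => ha (hP.subset_of_mem_insert_empty ho h)
  have hao' : a ∉ o' := fun h => ha (hP'.subset_of_mem_insert_empty ho' h)
  have hblock : insert a o = insert a o' :=
    hQ.eq_of_mem (mem_insert_self _ _) (h ▸ mem_insert_self _ _) (mem_insert_self a o)
      (mem_insert_self a o')
  obtain rfl : o = o' := by rw [← erase_insert hao, hblock, erase_insert hao']
  have hPP : P.erase o = P'.erase o := by
    rw [← erase_insertInto hP ha, h, erase_insertInto hP' ha]
  refine ⟨?_, rfl⟩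
  obtain rfl | hoP := mem_insert.1 ho
  · simpa [erase_eq_of_notMem hP.empty_notMem, erase_eq_of_notMem hP'.empty_notMem] using hPP
  · have hoP' : o ∈ P' := (mem_insert.1 ho').resolve_left (hP.nonempty hoP).ne_empty
    rw [← insert_erase hoP, hPP, insert_erase hoP']

lemma exists_insertInto_eq {Q : Finset (Finset α)} (ha : a ∉ s)
    (hQ : IsPartitionOf (insert a s) Q) :
    ∃ P o, IsPartitionOf s P ∧ o ∈ insert ∅ P ∧ insertInto a P o = Q := by
  obtain ⟨b, hb, hab⟩ := hQ.exists_mem (mem_insert_self a s)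
  have hbs : b.erase a ⊆ s := subset_insert_iff.1 (hQ.subset hb)
  have hR : IsPartitionOf (s \ b.erase a) (Q.erase b) := by
    convert hQ.erase hb using 1
    ext x
    by_cases hx : x = a <;> simp_all
  by_cases ho : b.erase a = ∅
  · refine ⟨Q.erase b, ∅, by simpa [ho] using hR, mem_insert_self _ _, ?_⟩
    rw [insertInto, erase_eq_of_notMem hR.empty_notMem, ← ho, insert_erase hab, insert_erase hb]
  · have hbR : b.erase a ∉ Q.erase b := fun h => by
      obtain ⟨x, hx⟩ := nonempty_iff_ne_empty.2 ho
      exact ne_of_mem_erase h (hQ.eq_of_mem (mem_of_mem_erase h) hb hx (mem_of_mem_erase hx))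
    refine ⟨insert (b.erase a) (Q.erase b), b.erase a, ?_,
      mem_insert_of_mem (mem_insert_self _ _), ?_⟩
    · simpa [union_sdiff_of_subset hbs] using
        hR.extend (nonempty_iff_ne_empty.2 ho) disjoint_sdiff
    · rw [insertInto, insert_erase hab, erase_insert hbR, insert_erase hb]

lemma sum_partitions_insert [Fintype α] {M : Type*} [AddCommMonoid M]
    (f : Finset (Finset α) → M) (ha : a ∉ s) :
    ∑ Q ∈ univ.filter (IsPartitionOf (insert a s)), f Q =
      ∑ P ∈ univ.filter (IsPartitionOf s), ∑ o ∈ insert ∅ P, f (insertInto a P o) := by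
  rw [sum_sigma']
  symm
  refine sum_bij (fun x _ => insertInto a x.1 x.2) ?_ ?_ ?_ fun _ _ => rfl
  · rintro ⟨P, o⟩ hx
    simp only [mem_sigma, mem_filter_univ] at hx ⊢
    exact isPartitionOf_insertInto hx.1 ha hx.2
  · rintro ⟨P, o⟩ hx ⟨P', o'⟩ hx' h
    simp only [mem_sigma, mem_filter_univ] at hx hx'
    obtain ⟨rfl, rfl⟩ := insertInto_inj hx.1 hx'.1 ha hx.2 hx'.2 h
    rfl
  · intro Q hQ
    obtain ⟨P, o, hP, ho, rfl⟩ := exists_insertInto_eq ha (mem_filter_univ _ |>.1 hQ)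
    exact ⟨⟨P, o⟩, by simp [hP, ho], rfl⟩

lemma ewensWeight_insert (θ : ℝ) (hb : o ∉ P) :
    ewensWeight θ (insert o P) = θ * Real.Gamma #o * ewensWeight θ P := by
  rw [ewensWeight, ewensWeight, card_insert_of_notMem hb, prod_insert hb]
  ring

lemma ewensWeight_insertInto_empty (θ : ℝ) (hP : IsPartitionOf s P) (ha : a ∉ s) :
    ewensWeight θ (insertInto a P ∅) = θ * ewensWeight θ P := by
  rw [insertInto, erase_eq_of_notMem hP.empty_notMem,
    ewensWeight_insert θ (hP.insert_notMem ha ∅)]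
  simp

lemma ewensWeight_insertInto_of_mem (θ : ℝ) (hP : IsPartitionOf s P) (ha : a ∉ s)
    (ho : o ∈ P) : ewensWeight θ (insertInto a P o) = #o * ewensWeight θ P := by
  have hΓ : Real.Gamma #(insert a o) = #o * Real.Gamma #o := by
    rw [card_insert_of_notMem fun h => ha (hP.subset ho h), Nat.cast_succ,
      Real.Gamma_add_one (by exact_mod_cast (hP.nonempty ho).card_pos.ne')]
  have hW : ewensWeight θ P = θ * Real.Gamma #o * ewensWeight θ (P.erase o) := by
    conv_lhs => rw [← insert_erase ho]
    exact ewensWeight_insert θ (notMem_erase o P)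
  rw [insertInto, ewensWeight_insert θ fun h => hP.insert_notMem ha o (mem_of_mem_erase h),
    hΓ, hW]
  ring

lemma sum_ewensWeight_insertInto (θ : ℝ) (hP : IsPartitionOf s P) (ha : a ∉ s) :
    ∑ o ∈ insert ∅ P, ewensWeight θ (insertInto a P o) = (θ + #s) * ewensWeight θ P := by
  rw [sum_insert hP.empty_notMem, ewensWeight_insertInto_empty θ hP ha,
    sum_congr rfl fun o ho => ewensWeight_insertInto_of_mem θ hP ha ho, ← sum_mul,
    ← Nat.cast_sum, hP.sum_card]
  ring

theorem sum_ewensWeight [Fintype α] (θ : ℝ) (s : Finset α) :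
    ∑ P ∈ univ.filter (IsPartitionOf s), ewensWeight θ P = ∏ j ∈ range #s, (θ + j) := by
  induction s using Finset.induction_on with
  | empty =>
    have : univ.filter (IsPartitionOf (∅ : Finset α)) = {∅} := by
      ext P
      simp only [mem_filter_univ, mem_singleton]
      exact ⟨IsPartitionOf.eq_empty, fun h => h ▸ ⟨by simp, by simp, rfl⟩⟩
    simp [this, ewensWeight]
  | @insert a s ha ih =>
    rw [sum_partitions_insert _ ha, sum_congr rfl fun P hP =>
        sum_ewensWeight_insertInto θ (mem_filter_univ _ |>.1 hP) ha,
      ← mul_sum, ih, card_insert_of_notMem ha, prod_range_succ, mul_comm]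

theorem stmt_16_general (θ : ℝ) (n : ℕ) :
    ∑ P ∈ Finset.univ.filter (fun P : Finset (Finset (Fin n)) => IsPartitionOfUniv P),
        θ ^ P.card * ∏ b ∈ P, Real.Gamma (b.card) =
      ∏ j ∈ Finset.range n, (θ + j) := by
  have h := sum_ewensWeight θ (univ : Finset (Fin n))
  rw [card_univ, Fintype.card_fin] at h
  exact h

theorem stmt_16 (θ : ℝ) (hθ : 0 < θ) (n : ℕ) (hn : 1 ≤ n) :
    ∑ P ∈ Finset.univ.filter (fun P : Finset (Finset (Fin n)) => IsPartitionOfUniv P),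
        θ ^ P.card * ∏ b ∈ P, Real.Gamma (b.card) =
      ∏ j ∈ Finset.range n, (θ + j) :=
  stmt_16_general θ n
end
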